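/- Let k be a field with char(k) ≠ 2. Let V₇ = k ⊗ L ≅ k⁷ with the quadratic form q₇(x) = B_k(x,x), on which C acts via the reflections s_{β₁}, …, s_{β₄}. Let W₇ = k⁷ with the diagonal quadratic form ⟨−2,−2,−2,−2,−1,−1,1⟩, with C acting so that the generator corresponding to s_{β_i} (1 ≤ i ≤ 4) negates the i-th coordinate and fixes the last three coordinates. Then there is a C-equivariant isometry from (V₇, q₇) to (W₇, ⟨−2,−2,−2,−2,−1,−1,1⟩), i.e., a k-linear isomorphism preserving the quadratic forms and intertwining the two C-actions. -/
import Mathlib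


open scoped TensorProduct

/-- The `k`-bilinear extension of `B` to `k⁷`. -/
def Bk {k : Type*} [CommRing k] (x y : Fin 7 → k) : k :=
  x 0 * y 0 - (x 1 * y 1 + x 2 * y 2 + x 3 * y 3 + x 4 * y 4 + x 5 * y 5 + x 6 * y 6)

/-- The image of `h` in `k⁷`. -/
def hvk {k : Type*} [CommRing k] : Fin 7 → k := ![3, -1, -1, -1, -1, -1, -1]

/-- The images of `β₁, …, β₄` in `k⁷`. -/
def βkv {k : Type*} [CommRing k] : Fin 4 → (Fin 7 → k) :=
  ![![0, 1, -1, 0, 0, 0, 0], ![0, 0, 0, 1, -1, 0, 0], ![0, 0, 0, 0, 0, 1, -1],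
    ![2, -1, -1, -1, -1, -1, -1]]

/-- Forward map of the isometry. -/
def φf {k : Type*} [Field k] (x : Fin 7 → k) : Fin 7 → k := fun j =>
  if j = 0 then (x 1 - x 2) / 2
  else if j = 1 then (x 3 - x 4) / 2
  else if j = 2 then (x 5 - x 6) / 2
  else if j = 3 then -x 0 - (x 1 + x 2 + x 3 + x 4 + x 5 + x 6) / 2
  else if j = 4 then -x 0 - x 1 - x 2
  else if j = 5 then (x 5 + x 6 - x 3 - x 4) / 2
  else 2 * x 0 + x 1 + x 2 + (x 3 + x 4 + x 5 + x 6) / 2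

/-- Inverse map of the isometry. -/
def φg {k : Type*} [Field k] (y : Fin 7 → k) : Fin 7 → k := fun j =>
  if j = 0 then 2 * y 3 + y 4 + 2 * y 6
  else if j = 1 then y 0 - y 3 - y 4 - y 6
  else if j = 2 then -y 0 - y 3 - y 4 - y 6
  else if j = 3 then y 1 - y 3 - (y 5 + y 6) / 2
  else if j = 4 then -y 1 - y 3 - (y 5 + y 6) / 2
  else if j = 5 then y 2 - y 3 - (y 6 - y 5) / 2
  else -y 2 - y 3 - (y 6 - y 5) / 2

lemma φf_add {k : Type*} [Field k] (x y : Fin 7 → k) : φf (x + y) = φf x + φf y := by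
  funext j; fin_cases j <;> simp [φf] <;> ring

lemma φf_smul {k : Type*} [Field k] (c : k) (x : Fin 7 → k) : φf (c • x) = c • φf x := by
  funext j; fin_cases j <;> simp [φf] <;> ring

lemma φgf {k : Type*} [Field k] (hk2 : (2:k) ≠ 0) (x : Fin 7 → k) : φg (φf x) = x := by
  funext j; fin_cases j <;> simp [φf, φg] <;> (try field_simp) <;> (try ring)

lemma φfg {k : Type*} [Field k] (hk2 : (2:k) ≠ 0) (y : Fin 7 → k) : φf (φg y) = y := by
  funext j; fin_cases j <;> simp [φf, φg] <;> (try field_simp) <;> (try ring)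

lemma φf_quad {k : Type*} [Field k] (hk2 : (2:k) ≠ 0) (x : Fin 7 → k) :
    -2 * ((φf x) 0 ^ 2 + (φf x) 1 ^ 2 + (φf x) 2 ^ 2 + (φf x) 3 ^ 2)
      - (φf x) 4 ^ 2 - (φf x) 5 ^ 2 + (φf x) 6 ^ 2 = Bk x x := by
  simp only [φf, Bk, Fin.reduceEq, reduceIte]
  field_simp
  ring

lemma add_smul_app {k : Type*} [CommRing k] (x v : Fin 7 → k) (c : k) (j : Fin 7) :
    (x + c • v) j = x j + c * v j := rfl

lemma βkv_e_0_0 {k : Type*} [CommRing k] : βkv (k := k) 0 0 = 0 := rfl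
lemma βkv_e_0_1 {k : Type*} [CommRing k] : βkv (k := k) 0 1 = 1 := rfl
lemma βkv_e_0_2 {k : Type*} [CommRing k] : βkv (k := k) 0 2 = -1 := rfl
lemma βkv_e_0_3 {k : Type*} [CommRing k] : βkv (k := k) 0 3 = 0 := rfl
lemma βkv_e_0_4 {k : Type*} [CommRing k] : βkv (k := k) 0 4 = 0 := rfl
lemma βkv_e_0_5 {k : Type*} [CommRing k] : βkv (k := k) 0 5 = 0 := rfl
lemma βkv_e_0_6 {k : Type*} [CommRing k] : βkv (k := k) 0 6 = 0 := rfl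
lemma βkv_e_1_0 {k : Type*} [CommRing k] : βkv (k := k) 1 0 = 0 := rfl
lemma βkv_e_1_1 {k : Type*} [CommRing k] : βkv (k := k) 1 1 = 0 := rfl
lemma βkv_e_1_2 {k : Type*} [CommRing k] : βkv (k := k) 1 2 = 0 := rfl
lemma βkv_e_1_3 {k : Type*} [CommRing k] : βkv (k := k) 1 3 = 1 := rfl
lemma βkv_e_1_4 {k : Type*} [CommRing k] : βkv (k := k) 1 4 = -1 := rfl
lemma βkv_e_1_5 {k : Type*} [CommRing k] : βkv (k := k) 1 5 = 0 := rfl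
lemma βkv_e_1_6 {k : Type*} [CommRing k] : βkv (k := k) 1 6 = 0 := rfl
lemma βkv_e_2_0 {k : Type*} [CommRing k] : βkv (k := k) 2 0 = 0 := rfl
lemma βkv_e_2_1 {k : Type*} [CommRing k] : βkv (k := k) 2 1 = 0 := rfl
lemma βkv_e_2_2 {k : Type*} [CommRing k] : βkv (k := k) 2 2 = 0 := rfl
lemma βkv_e_2_3 {k : Type*} [CommRing k] : βkv (k := k) 2 3 = 0 := rfl
lemma βkv_e_2_4 {k : Type*} [CommRing k] : βkv (k := k) 2 4 = 0 := rfl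
lemma βkv_e_2_5 {k : Type*} [CommRing k] : βkv (k := k) 2 5 = 1 := rfl
lemma βkv_e_2_6 {k : Type*} [CommRing k] : βkv (k := k) 2 6 = -1 := rfl
lemma βkv_e_3_0 {k : Type*} [CommRing k] : βkv (k := k) 3 0 = 2 := rfl
lemma βkv_e_3_1 {k : Type*} [CommRing k] : βkv (k := k) 3 1 = -1 := rfl
lemma βkv_e_3_2 {k : Type*} [CommRing k] : βkv (k := k) 3 2 = -1 := rfl
lemma βkv_e_3_3 {k : Type*} [CommRing k] : βkv (k := k) 3 3 = -1 := rfl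
lemma βkv_e_3_4 {k : Type*} [CommRing k] : βkv (k := k) 3 4 = -1 := rfl
lemma βkv_e_3_5 {k : Type*} [CommRing k] : βkv (k := k) 3 5 = -1 := rfl
lemma βkv_e_3_6 {k : Type*} [CommRing k] : βkv (k := k) 3 6 = -1 := rfl

lemma φf_equiv0 {k : Type*} [Field k] (hk2 : (2:k) ≠ 0) (x : Fin 7 → k) :
    φf (x + Bk x (βkv 0) • βkv 0)
      = fun j => if j = Fin.castLE (by norm_num) (0 : Fin 4) then -(φf x) j else (φf x) j := by
  have h0 : Bk x (βkv 0) = -(x 1) + x 2 := by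
    simp only [Bk, βkv_e_0_0, βkv_e_0_1, βkv_e_0_2, βkv_e_0_3, βkv_e_0_4, βkv_e_0_5, βkv_e_0_6]
    ring
  have hc : (Fin.castLE (by norm_num) (0 : Fin 4) : Fin 7) = 0 := rfl
  simp only [hc, h0]
  funext j
  fin_cases j <;>
    simp [add_smul_app, φf, βkv_e_0_0, βkv_e_0_1, βkv_e_0_2, βkv_e_0_3, βkv_e_0_4, βkv_e_0_5, βkv_e_0_6] <;>
    (try field_simp) <;> (try ring)

lemma φf_equiv1 {k : Type*} [Field k] (hk2 : (2:k) ≠ 0) (x : Fin 7 → k) :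
    φf (x + Bk x (βkv 1) • βkv 1)
      = fun j => if j = Fin.castLE (by norm_num) (1 : Fin 4) then -(φf x) j else (φf x) j := by
  have h0 : Bk x (βkv 1) = -(x 3) + x 4 := by
    simp only [Bk, βkv_e_1_0, βkv_e_1_1, βkv_e_1_2, βkv_e_1_3, βkv_e_1_4, βkv_e_1_5, βkv_e_1_6]
    ring
  have hc : (Fin.castLE (by norm_num) (1 : Fin 4) : Fin 7) = 1 := rfl
  simp only [hc, h0]
  funext j
  fin_cases j <;>
    simp [add_smul_app, φf, βkv_e_1_0, βkv_e_1_1, βkv_e_1_2, βkv_e_1_3, βkv_e_1_4, βkv_e_1_5, βkv_e_1_6] <;>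
    (try field_simp) <;> (try ring)

lemma φf_equiv2 {k : Type*} [Field k] (hk2 : (2:k) ≠ 0) (x : Fin 7 → k) :
    φf (x + Bk x (βkv 2) • βkv 2)
      = fun j => if j = Fin.castLE (by norm_num) (2 : Fin 4) then -(φf x) j else (φf x) j := by
  have h0 : Bk x (βkv 2) = -(x 5) + x 6 := by
    simp only [Bk, βkv_e_2_0, βkv_e_2_1, βkv_e_2_2, βkv_e_2_3, βkv_e_2_4, βkv_e_2_5, βkv_e_2_6]
    ring
  have hc : (Fin.castLE (by norm_num) (2 : Fin 4) : Fin 7) = 2 := rfl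
  simp only [hc, h0]
  funext j
  fin_cases j <;>
    simp [add_smul_app, φf, βkv_e_2_0, βkv_e_2_1, βkv_e_2_2, βkv_e_2_3, βkv_e_2_4, βkv_e_2_5, βkv_e_2_6] <;>
    (try field_simp) <;> (try ring)

lemma φf_equiv3 {k : Type*} [Field k] (hk2 : (2:k) ≠ 0) (x : Fin 7 → k) :
    φf (x + Bk x (βkv 3) • βkv 3)
      = fun j => if j = Fin.castLE (by norm_num) (3 : Fin 4) then -(φf x) j else (φf x) j := by
  have h0 : Bk x (βkv 3) = 2 * x 0 + x 1 + x 2 + x 3 + x 4 + x 5 + x 6 := by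
    simp only [Bk, βkv_e_3_0, βkv_e_3_1, βkv_e_3_2, βkv_e_3_3, βkv_e_3_4, βkv_e_3_5, βkv_e_3_6]
    ring
  have hc : (Fin.castLE (by norm_num) (3 : Fin 4) : Fin 7) = 3 := rfl
  simp only [hc, h0]
  funext j
  fin_cases j <;>
    simp [add_smul_app, φf, βkv_e_3_0, βkv_e_3_1, βkv_e_3_2, βkv_e_3_3, βkv_e_3_4, βkv_e_3_5, βkv_e_3_6] <;>
    (try field_simp) <;> (try ring)

/-- The `C`-quadratic form `q₇(x) = B(x,x)` on `V₇ = k ⊗ L` is `C`-equivariantly isometric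
to `⟨−2,−2,−2,−2,−1,−1,1⟩`, where the generator `s_{βᵢ}` negates the `i`-th coordinate. -/
theorem q7_restricted_to_cube (k : Type*) [Field k] (hk2 : (2 : k) ≠ 0) :
    ∃ φ : (Fin 7 → k) ≃ₗ[k] (Fin 7 → k),
      (∀ x : Fin 7 → k,
        -2 * ((φ x) 0 ^ 2 + (φ x) 1 ^ 2 + (φ x) 2 ^ 2 + (φ x) 3 ^ 2)
          - (φ x) 4 ^ 2 - (φ x) 5 ^ 2 + (φ x) 6 ^ 2 = Bk x x) ∧
      (∀ (i : Fin 4) (x : Fin 7 → k),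
        φ (x + Bk x (βkv i) • βkv i)
          = fun j => if j = Fin.castLE (by norm_num) i then -(φ x) j else (φ x) j) := by
  refine ⟨{ toFun := φf, invFun := φg, map_add' := φf_add, map_smul' := φf_smul,
            left_inv := φgf hk2, right_inv := φfg hk2 },
          φf_quad hk2, ?_⟩
  intro i x
  fin_cases i
  · exact φf_equiv0 hk2 x
  · exact φf_equiv1 hk2 x
  · exact φf_equiv2 hk2 x
  · exact φf_equiv3 hk2 x
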